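/- arXiv:1906.05848 — 4 statements merged into one kernel-verified Lean document; each statement's English description precedes it below -/
import Mathlib

section
/- Let B₁,…,B_r be connected building sets on pairwise disjoint finite sets S₁,…,S_r of positive integers, and let B = B₁ ⊔ ⋯ ⊔ B_r ⊔ {S} be the combined connected building set on S = S₁ ∪ ⋯ ∪ S_r. Then the h-polynomial satisfies h_B(t) = (1 + t + ⋯ + t^{r-1}) · ∏_{i=1}^r h_{B_i}(t), as an identity of polynomials in ℤ[t]. -/
/-!
A `B`-tree for the combined building set has its root in some component `S i₀`. Cutting the edges
from the root into the other components leaves a `B_j`-tree on every `S j` (a component without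
the root hangs below a single child of the root, because the children of the root are
incomparable while their subtrees cover `S j ∈ B`). Conversely, grafting the roots of
`B_j`-trees `T_j`, `j ≠ i₀`, onto the root of `T_{i₀}` produces every `B`-tree exactly once.
The descents of the grafted tree are those of the `T_j` plus one for each `j` whose root
exceeds the root of `T_{i₀}`; as the roots are distinct, summing `t ^ #{j | root j > root i₀}`
over `i₀` gives `1 + t + ⋯ + t ^ (r - 1)`.
-/

open scoped Classical

noncomputable section

/-- A rooted tree on the vertex set `S ⊆ ℕ`, encoded by its root and its parent
function; edges are directed away from the root (so each non-root vertex `i`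
carries the edge `(i, parent i)`, with `parent i` closer to the root).  The
parent function is normalized to be the identity outside `S` and at the root. -/
structure RTree (S : Finset ℕ) where
  root : ℕ
  root_mem : root ∈ S
  parent : ℕ → ℕ
  parent_out : ∀ i, i ∉ S → parent i = i
  parent_root : parent root = root
  parent_mem : ∀ i ∈ S, parent i ∈ S
  reach : ∀ i ∈ S, ∃ k, parent^[k] i = root

namespace RTree

variable {S : Finset ℕ}

/-- The set `T_{≤ i}` of descendants of `i` in `T` (including `i` itself). -/
def desc (T : RTree S) (i : ℕ) : Finset ℕ :=
  S.filter fun j => ∃ k, T.parent^[k] j = i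

/-- The depth of a vertex: its distance to the root. -/
def dp (T : RTree S) (x : ℕ) : ℕ :=
  sInf {k | T.parent^[k] x = T.root}

/-- The depth of the tree: the maximal depth of a vertex. -/
def depth (T : RTree S) : ℕ := S.sup T.dp

/-- The set of descent edges `(i, parent i)` with `i > parent i`, recorded by
the child endpoint `i`. -/
def desSet (T : RTree S) : Finset ℕ :=
  S.filter fun i => i ≠ T.root ∧ T.parent i < i

/-- The number of descents of `T`. -/
def des (T : RTree S) : ℕ := T.desSet.card

/-- The major index of `T`: the sum, over all descent edges `(i,j)` of `T`
(with `j = parent i`), of `depth T - dp j`, i.e. of the minimal rank of `j`. -/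
def maj (T : RTree S) : ℕ :=
  ∑ i ∈ T.desSet, (T.depth - T.dp (T.parent i))

/-- The statistic `μ(T)`: the sum, over all edges `(i,j)` of `T`
(with `j = parent i`), of `depth T - dp j`. -/
def mu (T : RTree S) : ℕ :=
  ∑ i ∈ S.filter (fun i => i ≠ T.root), (T.depth - T.dp (T.parent i))

end RTree

/-- `B` is a building set on the finite ground set `S`. -/
def IsBuildingSet (S : Finset ℕ) (B : Finset (Finset ℕ)) : Prop :=
  (∀ I ∈ B, I ⊆ S ∧ I.Nonempty) ∧
  (∀ I ∈ B, ∀ J ∈ B, (I ∩ J).Nonempty → I ∪ J ∈ B) ∧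
  (∀ i ∈ S, ({i} : Finset ℕ) ∈ B)

/-- `B` is a connected building set on `S`. -/
def IsConnBuildingSet (S : Finset ℕ) (B : Finset (Finset ℕ)) : Prop :=
  IsBuildingSet S B ∧ S ∈ B

/-- `T` is a `B`-tree: all descendant sets belong to `B`, and no union of
descendant sets of `k ≥ 2` pairwise incomparable nodes belongs to `B`. -/
def IsBTree (S : Finset ℕ) (B : Finset (Finset ℕ)) (T : RTree S) : Prop :=
  (∀ i ∈ S, T.desc i ∈ B) ∧
  ∀ I : Finset ℕ, I ⊆ S → 2 ≤ I.card →
    (∀ i ∈ I, ∀ j ∈ I, i ≠ j → i ∉ T.desc j ∧ j ∉ T.desc i) →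
    I.biUnion T.desc ∉ B

open Finset Function Polynomial

theorem Set.EqOn.iterate_apply_eq {α : Type*} {f g : α → α} {A : Set α} (h : Set.EqOn f g A)
    {k : ℕ} {x : α} (hx : ∀ m < k, g^[m] x ∈ A) : f^[k] x = g^[k] x := by
  induction k with
  | zero => rfl
  | succ k ih =>
    rw [Function.iterate_succ_apply', Function.iterate_succ_apply',
      ih fun m hm => hx m (by omega), h (hx k (by omega))]

namespace RTree

variable {S : Finset ℕ}

theorem ext {T T' : RTree S} (hroot : T.root = T'.root) (hparent : T.parent = T'.parent) :
    T = T' := by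
  cases T; cases T'; simp_all

instance : Finite (RTree S) := by
  refine Finite.of_injective (fun T : RTree S => ((⟨T.root, T.root_mem⟩ : S),
    fun x : S => (⟨T.parent x, T.parent_mem x x.2⟩ : S))) fun T T' h => ?_
  simp only [Prod.mk.injEq, Subtype.mk.injEq, funext_iff, Subtype.forall] at h
  refine ext h.1 (funext fun x => ?_)
  by_cases hx : x ∈ S
  · exact h.2 x hx
  · rw [T.parent_out x hx, T'.parent_out x hx]

variable (T : RTree S)

theorem iterate_parent_root (k : ℕ) : T.parent^[k] T.root = T.root :=
  Function.iterate_fixed T.parent_root k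

theorem iterate_parent_mem {x : ℕ} (hx : x ∈ S) (k : ℕ) : T.parent^[k] x ∈ S := by
  induction k with
  | zero => exact hx
  | succ k ih => rw [Function.iterate_succ_apply']; exact T.parent_mem _ ih

theorem desc_subset (x : ℕ) : T.desc x ⊆ S := filter_subset _ _

theorem mem_desc_self {x : ℕ} (hx : x ∈ S) : x ∈ T.desc x := mem_filter.2 ⟨hx, 0, rfl⟩

theorem mem_desc_parent {x : ℕ} (hx : x ∈ S) : x ∈ T.desc (T.parent x) :=
  mem_filter.2 ⟨hx, 1, rfl⟩

theorem desc_root : T.desc T.root = S :=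
  (T.desc_subset _).antisymm fun y hy => mem_filter.2 ⟨hy, T.reach y hy⟩

theorem root_notMem_desc {x : ℕ} (hx : x ≠ T.root) : T.root ∉ T.desc x := by
  rintro hmem
  obtain ⟨-, k, hk⟩ := mem_filter.1 hmem
  exact hx (hk.symm.trans (T.iterate_parent_root k))

theorem exists_iterate_eq_of_mem_desc {x y : ℕ} (hy : y ∈ T.desc x) :
    ∃ k, T.parent^[k] y = x ∧ ∀ m < k, T.parent^[m] y ≠ T.root := by
  have hex := (mem_filter.1 hy).2
  refine ⟨Nat.find hex, Nat.find_spec hex, fun m hm hroot => Nat.find_min hex hm ?_⟩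
  -- once the path reaches the root it stays there, so `x` would be the root, reached at time `m`
  have hK : T.parent^[Nat.find hex] y = T.root := by
    rw [← Nat.sub_add_cancel hm.le, Function.iterate_add_apply, hroot, iterate_parent_root]
  rw [hroot, ← hK, Nat.find_spec hex]

theorem exists_child_root_mem_desc {y : ℕ} (hy : y ∈ S) (hne : y ≠ T.root) :
    ∃ c ∈ S, c ≠ T.root ∧ T.parent c = T.root ∧ y ∈ T.desc c := by
  have hex := T.reach y hy
  have hpos : Nat.find hex ≠ 0 := fun h => hne (by simpa [h] using Nat.find_spec hex)
  refine ⟨T.parent^[Nat.find hex - 1] y, T.iterate_parent_mem hy _,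
    Nat.find_min hex (by omega), ?_, mem_filter.2 ⟨hy, _, rfl⟩⟩
  rw [← Function.iterate_succ_apply' T.parent, Nat.succ_eq_add_one, Nat.sub_add_cancel (by omega),
    Nat.find_spec hex]

theorem notMem_desc_of_parent_eq_root {c c' : ℕ} (hc : T.parent c = T.root) (hc' : c' ≠ T.root)
    (hne : c ≠ c') : c ∉ T.desc c' := by
  rintro hmem
  obtain ⟨-, k, hk⟩ := mem_filter.1 hmem
  cases k with
  | zero => exact hne hk
  | succ k =>
    rw [Function.iterate_succ_apply, hc, iterate_parent_root] at hk
    exact hc' hk.symm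

section Restrict

variable (A : Finset ℕ) (z : ℕ) (hz : z ∈ A) (hcl : ∀ x ∈ A, x ≠ z → T.parent x ∈ A)
  (hreach : ∀ y ∈ A, ∃ k, T.parent^[k] y = z)

def restrict : RTree A where
  root := z
  root_mem := hz
  parent x := if x ∈ A ∧ x ≠ z then T.parent x else x
  parent_out _ hx := if_neg fun h => hx h.1
  parent_root := if_neg fun h => h.2 rfl
  parent_mem x hx := by
    split_ifs with h
    · exact hcl x h.1 h.2
    · exact hx
  reach y hy := by
    have hex := hreach y hy
    have horbit : ∀ m < Nat.find hex, T.parent^[m] y ∈ {x | x ∈ A ∧ x ≠ z} := by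
      intro m hm
      induction m with
      | zero => exact ⟨hy, Nat.find_min hex hm⟩
      | succ m ih =>
        obtain ⟨hA, hne⟩ := ih (by omega)
        rw [Function.iterate_succ_apply']
        refine ⟨hcl _ hA hne, ?_⟩
        rw [← Function.iterate_succ_apply' T.parent]
        exact Nat.find_min hex hm
    refine ⟨Nat.find hex, ?_⟩
    rw [Set.EqOn.iterate_apply_eq (f := fun x => if x ∈ A ∧ x ≠ z then T.parent x else x)
      (fun x hx => if_pos hx) horbit]
    exact Nat.find_spec hex

theorem restrict_parent {x : ℕ} (hx : x ∈ A) (hxz : x ≠ z) :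
    (T.restrict A z hz hcl hreach).parent x = T.parent x :=
  if_pos ⟨hx, hxz⟩

end Restrict

end RTree

def PairwiseIncomparable (D : ℕ → Finset ℕ) (I : Finset ℕ) : Prop :=
  ∀ i ∈ I, ∀ j ∈ I, i ≠ j → i ∉ D j ∧ j ∉ D i

namespace PairwiseIncomparable

variable {D D' : ℕ → Finset ℕ} {I : Finset ℕ}

theorem notMem_of_subset (h : PairwiseIncomparable D I) (hI : 2 ≤ #I) {x : ℕ}
    (hx : I ⊆ D x) : x ∉ I := by
  intro hxI
  obtain ⟨y, hy, hyx⟩ := exists_mem_ne hI x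
  exact (h y hy x hxI hyx).1 (hx hy)

theorem congr (hD : ∀ x ∈ I, D x = D' x) :
    PairwiseIncomparable D I ↔ PairwiseIncomparable D' I := by
  refine forall₂_congr fun i hi => forall₂_congr fun j hj => ?_
  rw [hD i hi, hD j hj]

end PairwiseIncomparable

theorem sum_card_filter_lt_eq_sum_range {ι α M : Type*} [Fintype ι] [LinearOrder α]
    [AddCommMonoid M] {ρ : ι → α} (hρ : Injective ρ) (f : ℕ → M) :
    ∑ i, f #{j | ρ i < ρ j} = ∑ k ∈ range (Fintype.card ι), f k := by
  set c : ι → ℕ := fun i => #{j | ρ i < ρ j}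
  have hanti : ∀ a b, ρ a < ρ b → c b < c a := fun a b hab =>
    card_lt_card <| (ssubset_iff_of_subset fun j hj => by
      simpa using hab.trans (by simpa using hj)).2 ⟨b, by simpa using hab, by simp⟩
  have hinj : Injective c := fun a b hab => by
    rcases lt_trichotomy (ρ a) (ρ b) with h | h | h
    · exact absurd hab (hanti a b h).ne'
    · exact hρ h
    · exact absurd hab (hanti b a h).ne
  have himage : univ.image c = range (Fintype.card ι) := by
    refine eq_of_subset_of_card_le (fun k hk => ?_)
      (by rw [card_range, card_image_of_injective _ hinj, card_univ])
    obtain ⟨i, -, rfl⟩ := mem_image.1 hk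
    exact mem_range.2 (card_lt_univ_of_notMem (x := i) (by simp))
  rw [← himage, sum_image hinj.injOn]

section Graft

variable {ι : Type*} {S : ι → Finset ℕ}

theorem index_eq_of_mem (hdisj : Pairwise (Disjoint on S)) {x : ℕ} {i j : ι} (hi : x ∈ S i)
    (hj : x ∈ S j) : i = j :=
  hdisj.eq (not_disjoint_iff.2 ⟨x, hi, hj⟩)

/-- The parent function of the tree obtained from trees `p j` on the disjoint sets `S j` by
attaching the roots of all `p j`, `j ≠ i₀`, to the root of `p i₀`. -/
def graftParent (p : ∀ j, RTree (S j)) (i₀ : ι) (x : ℕ) : ℕ :=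
  if h : ∃ j, x ∈ S j then
    if x = (p h.choose).root ∧ h.choose ≠ i₀ then (p i₀).root else (p h.choose).parent x
  else x

variable (hdisj : Pairwise (Disjoint on S)) (p : ∀ j, RTree (S j)) (i₀ : ι)

include hdisj

theorem graftParent_of_mem {x : ℕ} {j : ι} (hx : x ∈ S j) :
    graftParent p i₀ x =
      if x = (p j).root ∧ j ≠ i₀ then (p i₀).root else (p j).parent x := by
  have h : ∃ j, x ∈ S j := ⟨j, hx⟩
  rw [graftParent, dif_pos h, index_eq_of_mem hdisj h.choose_spec hx]

theorem graftParent_of_ne_root {x : ℕ} {j : ι} (hx : x ∈ S j) (hne : x ≠ (p j).root) :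
    graftParent p i₀ x = (p j).parent x := by
  rw [graftParent_of_mem hdisj p i₀ hx, if_neg (not_and_of_not_left _ hne)]

theorem graftParent_root_of_ne {j : ι} (hj : j ≠ i₀) :
    graftParent p i₀ (p j).root = (p i₀).root := by
  rw [graftParent_of_mem hdisj p i₀ (p j).root_mem, if_pos ⟨rfl, hj⟩]

theorem graftParent_root : graftParent p i₀ (p i₀).root = (p i₀).root := by
  rw [graftParent_of_mem hdisj p i₀ (p i₀).root_mem, if_neg fun h => h.2 rfl,
    (p i₀).parent_root]

theorem root_injective : Injective fun j => (p j).root := fun i j (h : (p i).root = (p j).root) =>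
  index_eq_of_mem hdisj (p i).root_mem (by rw [h]; exact (p j).root_mem)

theorem ne_root_of_ne_root {x : ℕ} {j : ι} (hx : x ∈ S j) (hne : x ≠ (p j).root) :
    x ≠ (p i₀).root := by
  rintro rfl
  obtain rfl := index_eq_of_mem hdisj hx (p i₀).root_mem
  exact hne rfl

theorem iterate_graftParent {j : ι} {y : ℕ} (hy : y ∈ S j) (k : ℕ) :
    (graftParent p i₀)^[k] y = (p j).parent^[k] y ∨
      (graftParent p i₀)^[k] y = (p i₀).root := by
  induction k with
  | zero => exact Or.inl rfl
  | succ k ih =>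
    rw [Function.iterate_succ_apply', Function.iterate_succ_apply']
    rcases ih with h | h
    · rw [h]
      by_cases hr : (p j).parent^[k] y = (p j).root ∧ j ≠ i₀
      · rw [hr.1, graftParent_root_of_ne hdisj p i₀ hr.2]
        exact Or.inr rfl
      · rw [graftParent_of_mem hdisj p i₀ ((p j).iterate_parent_mem hy k), if_neg hr]
        exact Or.inl rfl
    · rw [h, graftParent_root hdisj]
      exact Or.inr rfl

theorem exists_iterate_graftParent_of_mem_desc {j : ι} {x y : ℕ} (hy : y ∈ (p j).desc x) :
    ∃ k, (graftParent p i₀)^[k] y = x := by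
  obtain ⟨k, hk, hroot⟩ := (p j).exists_iterate_eq_of_mem_desc hy
  refine ⟨k, ?_⟩
  rw [Set.EqOn.iterate_apply_eq (g := (p j).parent) (A := {x | x ∈ S j ∧ x ≠ (p j).root})
    (fun x hx => graftParent_of_ne_root hdisj p i₀ hx.1 hx.2)
    fun m hm => ⟨(p j).iterate_parent_mem ((p j).desc_subset x hy) m, hroot m hm⟩, hk]

variable [Fintype ι]

def graft : RTree (univ.biUnion S) where
  root := (p i₀).root
  root_mem := mem_biUnion.2 ⟨i₀, mem_univ _, (p i₀).root_mem⟩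
  parent := graftParent p i₀
  parent_out x hx := dif_neg fun ⟨j, hj⟩ => hx (mem_biUnion.2 ⟨j, mem_univ _, hj⟩)
  parent_root := graftParent_root hdisj p i₀
  parent_mem x hx := by
    obtain ⟨j, -, hj⟩ := mem_biUnion.1 hx
    rw [graftParent_of_mem hdisj p i₀ hj]
    split_ifs
    · exact mem_biUnion.2 ⟨i₀, mem_univ _, (p i₀).root_mem⟩
    · exact mem_biUnion.2 ⟨j, mem_univ _, (p j).parent_mem x hj⟩
  reach x hx := by
    obtain ⟨j, -, hj⟩ := mem_biUnion.1 hx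
    obtain ⟨k, hk⟩ := exists_iterate_graftParent_of_mem_desc hdisj p i₀
      (show x ∈ (p j).desc (p j).root by rwa [(p j).desc_root])
    by_cases hji : j = i₀
    · subst hji
      exact ⟨k, hk⟩
    · refine ⟨k + 1, ?_⟩
      rw [Function.iterate_succ_apply', hk, graftParent_root_of_ne hdisj p i₀ hji]

theorem graft_root : (graft hdisj p i₀).root = (p i₀).root := rfl

theorem graft_parent : (graft hdisj p i₀).parent = graftParent p i₀ := rfl

theorem desc_graft {x : ℕ} {j : ι} (hx : x ∈ S j) (hne : x ≠ (p i₀).root) :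
    (graft hdisj p i₀).desc x = (p j).desc x := by
  ext y
  constructor
  · intro hy
    obtain ⟨hyS, k, hk⟩ := mem_filter.1 hy
    obtain ⟨l, -, hl⟩ := mem_biUnion.1 hyS
    rcases iterate_graftParent hdisj p i₀ hl k with h | h
    · have hk' : (p l).parent^[k] y = x := h.symm.trans hk
      obtain rfl := index_eq_of_mem hdisj (hk' ▸ (p l).iterate_parent_mem hl k) hx
      exact mem_filter.2 ⟨hl, k, hk'⟩
    · exact absurd (hk.symm.trans h) hne
  · intro hy
    exact mem_filter.2 ⟨mem_biUnion.2 ⟨j, mem_univ _, (p j).desc_subset x hy⟩,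
      exists_iterate_graftParent_of_mem_desc hdisj p i₀ hy⟩

theorem desc_graft_of_ne_root {x : ℕ} {j : ι} (hx : x ∈ S j) (hne : x ≠ (p j).root) :
    (graft hdisj p i₀).desc x = (p j).desc x :=
  desc_graft hdisj p i₀ hx (ne_root_of_ne_root hdisj p i₀ hx hne)

theorem desc_graft_root_of_ne {j : ι} (hj : j ≠ i₀) :
    (graft hdisj p i₀).desc (p j).root = S j := by
  rw [desc_graft hdisj p i₀ (p j).root_mem ((root_injective hdisj p).ne hj), (p j).desc_root]

theorem desSet_graft :
    (graft hdisj p i₀).desSet = univ.biUnion (fun j => (p j).desSet) ∪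
      image (fun j => (p j).root) {j | (p i₀).root < (p j).root} := by
  ext x
  rw [RTree.desSet, mem_filter]
  simp only [graft_root, graft_parent, mem_union, mem_biUnion, RTree.desSet, mem_filter, mem_image,
    mem_univ, true_and]
  constructor
  · rintro ⟨⟨j, hj⟩, hne, hlt⟩
    by_cases hxr : x = (p j).root
    · have hji : j ≠ i₀ := by rintro rfl; exact hne hxr
      rw [hxr, graftParent_root_of_ne hdisj p i₀ hji] at hlt
      exact Or.inr ⟨j, hlt, hxr.symm⟩
    · exact Or.inl ⟨j, hj, hxr, graftParent_of_ne_root hdisj p i₀ hj hxr ▸ hlt⟩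
  · rintro (⟨j, hj, hxr, hlt⟩ | ⟨j, hlt, rfl⟩)
    · exact ⟨⟨j, hj⟩, ne_root_of_ne_root hdisj p i₀ hj hxr,
        by rwa [graftParent_of_ne_root hdisj p i₀ hj hxr]⟩
    · have hji : j ≠ i₀ := by rintro rfl; exact lt_irrefl _ hlt
      exact ⟨⟨j, (p j).root_mem⟩, hlt.ne', by rwa [graftParent_root_of_ne hdisj p i₀ hji]⟩

theorem des_graft :
    (graft hdisj p i₀).des = #{j | (p i₀).root < (p j).root} + ∑ j, (p j).des := by
  rw [RTree.des, desSet_graft, card_union_of_disjoint, card_biUnion,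
    card_image_of_injective _ (root_injective hdisj p), add_comm]
  · rfl
  · exact fun i _ j _ hij => (hdisj hij).mono (filter_subset _ _) (filter_subset _ _)
  · refine disjoint_left.2 fun x hx hroot => ?_
    obtain ⟨j, -, hj⟩ := mem_biUnion.1 hx
    obtain ⟨l, -, rfl⟩ := mem_image.1 hroot
    obtain ⟨hlj, hne, -⟩ := mem_filter.1 hj
    obtain rfl := index_eq_of_mem hdisj (p l).root_mem hlj
    exact hne rfl

theorem graft_eq {T : RTree (univ.biUnion S)} (hroot : (p i₀).root = T.root)
    (hchild : ∀ j, T.parent (p j).root = T.root)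
    (hparent : ∀ j, ∀ x ∈ S j, x ≠ (p j).root → (p j).parent x = T.parent x) :
    graft hdisj p i₀ = T := by
  refine RTree.ext hroot (funext fun x => ?_)
  rw [graft_parent]
  by_cases hx : ∃ j, x ∈ S j
  · obtain ⟨j, hj⟩ := hx
    by_cases hxr : x = (p j).root
    · by_cases hji : j = i₀
      · subst hji
        rw [hxr, graftParent_root hdisj, hroot, T.parent_root]
      · rw [hxr, graftParent_root_of_ne hdisj p i₀ hji, hroot, hchild]
    · rw [graftParent_of_ne_root hdisj p i₀ hj hxr, hparent j x hj hxr]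
  · rw [graftParent, dif_neg hx, T.parent_out x fun h => hx (by simpa using h)]

end Graft

section BTree

variable {ι : Type*} [Fintype ι] {S : ι → Finset ℕ} {B : ι → Finset (Finset ℕ)}

def combinedBuildingSet (S : ι → Finset ℕ) (B : ι → Finset (Finset ℕ)) :
    Finset (Finset ℕ) :=
  univ.biUnion B ∪ {univ.biUnion S}

theorem mem_combinedBuildingSet {I : Finset ℕ} :
    I ∈ combinedBuildingSet S B ↔ (∃ j, I ∈ B j) ∨ I = univ.biUnion S := by
  simp [combinedBuildingSet, or_comm]

variable (hdisj : Pairwise (Disjoint on S)) (hB : ∀ j, IsConnBuildingSet (S j) (B j))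

theorem graft_injective : Injective fun a : (∀ j, RTree (S j)) × ι => graft hdisj a.1 a.2 := by
  rintro ⟨p, i₀⟩ ⟨p', i₀'⟩ h
  have hroot : (p i₀).root = (p' i₀').root := congrArg RTree.root h
  have hparent : graftParent p i₀ = graftParent p' i₀' := congrArg RTree.parent h
  have hi : i₀ = i₀' := index_eq_of_mem hdisj (p i₀).root_mem (hroot ▸ (p' i₀').root_mem)
  subst hi
  suffices hroots : ∀ j, (p j).root = (p' j).root by
    refine Prod.ext (funext fun j => RTree.ext (hroots j) (funext fun x => ?_)) rfl
    by_cases hx : x ∈ S j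
    · by_cases hxr : x = (p j).root
      · rw [hxr, (p j).parent_root, hroots j, (p' j).parent_root]
      · rw [← graftParent_of_ne_root hdisj p i₀ hx hxr, hparent,
          graftParent_of_ne_root hdisj p' i₀ hx (hroots j ▸ hxr)]
    · rw [(p j).parent_out x hx, (p' j).parent_out x hx]
  intro j
  by_contra hne
  have hji : j ≠ i₀ := by rintro rfl; exact hne hroot
  -- in the first tree the root of `p j` hangs below `S i₀`, in the second one it stays in `S j`
  have h1 := graftParent_root_of_ne hdisj p i₀ hji
  rw [hparent, graftParent_of_ne_root hdisj p' i₀ (p j).root_mem hne] at h1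
  exact hji (index_eq_of_mem hdisj (h1 ▸ (p' j).parent_mem _ (p j).root_mem) (p i₀).root_mem)

include hdisj hB

theorem mem_of_mem_combinedBuildingSet {I : Finset ℕ} (hI : I ∈ combinedBuildingSet S B)
    {y : ℕ} (hy : y ∈ univ.biUnion S) (hyI : y ∉ I) {x : ℕ} {j : ι} (hx : x ∈ S j)
    (hxI : x ∈ I) : I ∈ B j := by
  rcases mem_combinedBuildingSet.1 hI with ⟨k, hk⟩ | rfl
  · obtain rfl := index_eq_of_mem hdisj hx (((hB k).1.1 _ hk).1 hxI)
    exact hk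
  · exact absurd hy hyI

theorem isBTree_graft {p : ∀ j, RTree (S j)} (i₀ : ι) (hp : ∀ j, IsBTree (S j) (B j) (p j)) :
    IsBTree (univ.biUnion S) (combinedBuildingSet S B) (graft hdisj p i₀) := by
  set T := graft hdisj p i₀
  constructor
  · intro x hx
    obtain ⟨j, -, hj⟩ := mem_biUnion.1 hx
    rw [mem_combinedBuildingSet]
    by_cases hxr : x = T.root
    · rw [hxr, T.desc_root]
      exact Or.inr rfl
    · rw [desc_graft hdisj p i₀ hj hxr]
      exact Or.inl ⟨j, (hp j).1 x hj⟩
  · intro I hI hcard hinc hmem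
    have hrI : T.root ∉ I :=
      PairwiseIncomparable.notMem_of_subset hinc hcard (by rwa [T.desc_root])
    rcases mem_combinedBuildingSet.1 hmem with ⟨k, hk⟩ | hSc
    · have hIk : I ⊆ S k := fun x hx =>
        ((hB k).1.1 _ hk).1 (mem_biUnion.2 ⟨x, hx, T.mem_desc_self (hI hx)⟩)
      have hrk : (p k).root ∉ I := by
        by_cases hki : k = i₀
        · subst hki
          exact hrI
        · exact PairwiseIncomparable.notMem_of_subset hinc hcard
            (by rw [desc_graft_root_of_ne hdisj p i₀ hki]; exact hIk)
      have hD : ∀ x ∈ I, T.desc x = (p k).desc x := fun x hx =>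
        desc_graft_of_ne_root hdisj p i₀ (hIk hx) (ne_of_mem_of_not_mem hx hrk)
      exact (hp k).2 I hIk hcard ((PairwiseIncomparable.congr hD).1 hinc)
        (by rwa [← biUnion_congr rfl hD])
    · obtain ⟨x, hx, hrx⟩ :=
        mem_biUnion.1 (show T.root ∈ I.biUnion T.desc by rw [hSc]; exact T.root_mem)
      exact T.root_notMem_desc (ne_of_mem_of_not_mem hx hrI) hrx

theorem isBTree_of_isBTree_graft {p : ∀ j, RTree (S j)} {i₀ : ι}
    (hT : IsBTree (univ.biUnion S) (combinedBuildingSet S B) (graft hdisj p i₀)) (j : ι) :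
    IsBTree (S j) (B j) (p j) := by
  set T := graft hdisj p i₀
  constructor
  · intro x hx
    by_cases hxr : x = (p j).root
    · rw [hxr, (p j).desc_root]
      exact (hB j).2
    · have hxS := subset_biUnion_of_mem S (mem_univ j) hx
      rw [← desc_graft_of_ne_root hdisj p i₀ hx hxr]
      exact mem_of_mem_combinedBuildingSet hdisj hB (hT.1 x hxS) T.root_mem
        (T.root_notMem_desc (ne_root_of_ne_root hdisj p i₀ hx hxr)) hx (T.mem_desc_self hxS)
  · intro I hI hcard hinc hmem
    have hrI : (p j).root ∉ I :=
      PairwiseIncomparable.notMem_of_subset hinc hcard (by rwa [(p j).desc_root])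
    have hD : ∀ x ∈ I, T.desc x = (p j).desc x := fun x hx =>
      desc_graft_of_ne_root hdisj p i₀ (hI hx) (ne_of_mem_of_not_mem hx hrI)
    refine hT.2 I (hI.trans (subset_biUnion_of_mem S (mem_univ j))) hcard
      ((PairwiseIncomparable.congr hD).2 hinc) ?_
    rw [biUnion_congr rfl hD, mem_combinedBuildingSet]
    exact Or.inl ⟨j, hmem⟩

section Decompose

variable {T : RTree (univ.biUnion S)} (hT : IsBTree (univ.biUnion S) (combinedBuildingSet S B) T)
include hT

theorem desc_subset_of_isBTree_combined {x : ℕ} {j : ι} (hx : x ∈ S j) (hne : x ≠ T.root) :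
    T.desc x ⊆ S j := by
  have hxS := subset_biUnion_of_mem S (mem_univ j) hx
  exact ((hB j).1.1 _ (mem_of_mem_combinedBuildingSet hdisj hB (hT.1 x hxS) T.root_mem
    (T.root_notMem_desc hne) hx (T.mem_desc_self hxS))).1

theorem parent_mem_of_isBTree_combined {x : ℕ} {j : ι} (hx : x ∈ S j)
    (hpne : T.parent x ≠ T.root) : T.parent x ∈ S j := by
  have hxS := subset_biUnion_of_mem S (mem_univ j) hx
  obtain ⟨l, -, hl⟩ := mem_biUnion.1 (T.parent_mem x hxS)
  obtain rfl := index_eq_of_mem hdisj hx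
    (desc_subset_of_isBTree_combined hdisj hB hT hl hpne (T.mem_desc_parent hxS))
  exact hl

/-- The children of the root in `S j` are pairwise incomparable and their subtrees cover
`S j ∈ B`, so there is only one. -/
theorem exists_unique_child_root_of_isBTree_combined {j : ι} (hj : T.root ∉ S j) :
    ∃ z ∈ S j, T.parent z = T.root ∧ (∀ x ∈ S j, T.parent x = T.root → x = z) ∧
      S j ⊆ T.desc z := by
  set C := (S j).filter fun c => T.parent c = T.root
  have hcover : C.biUnion T.desc = S j := by
    refine (biUnion_subset.2 fun c hc => desc_subset_of_isBTree_combined hdisj hB hT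
      (mem_filter.1 hc).1 (ne_of_mem_of_not_mem (mem_filter.1 hc).1 hj)).antisymm fun y hy => ?_
    obtain ⟨c, hcS, hcr, hcp, hyc⟩ := T.exists_child_root_mem_desc
      (subset_biUnion_of_mem S (mem_univ j) hy) (ne_of_mem_of_not_mem hy hj)
    obtain ⟨l, -, hl⟩ := mem_biUnion.1 hcS
    obtain rfl := index_eq_of_mem hdisj (desc_subset_of_isBTree_combined hdisj hB hT hl hcr hyc) hy
    exact mem_biUnion.2 ⟨c, mem_filter.2 ⟨hl, hcp⟩, hyc⟩
  have hcard : #C ≤ 1 := by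
    by_contra h
    refine hT.2 C (fun c hc => subset_biUnion_of_mem S (mem_univ j) (mem_filter.1 hc).1) (by omega)
      (fun a ha b hb hab => ⟨?_, ?_⟩) ?_
    · exact T.notMem_desc_of_parent_eq_root (mem_filter.1 ha).2
        (ne_of_mem_of_not_mem (mem_filter.1 hb).1 hj) hab
    · exact T.notMem_desc_of_parent_eq_root (mem_filter.1 hb).2
        (ne_of_mem_of_not_mem (mem_filter.1 ha).1 hj) hab.symm
    · rw [hcover, mem_combinedBuildingSet]
      exact Or.inl ⟨j, (hB j).2⟩
  obtain ⟨y, hy⟩ := ((hB j).1.1 _ (hB j).2).2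
  obtain ⟨z, hz, -⟩ := mem_biUnion.1 (hcover.symm ▸ hy : y ∈ C.biUnion T.desc)
  obtain ⟨hzS, hzp⟩ := mem_filter.1 hz
  have huniq : ∀ c ∈ C, c = z := fun c hc => card_le_one.1 hcard c hc z hz
  refine ⟨z, hzS, hzp, fun x hx hxp => huniq x (mem_filter.2 ⟨hx, hxp⟩), ?_⟩
  rw [← hcover]
  exact biUnion_subset.2 fun c hc => by rw [huniq c hc]

theorem exists_root_of_isBTree_combined (j : ι) :
    ∃ z ∈ S j, (∀ x ∈ S j, x ≠ z → T.parent x ∈ S j) ∧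
      (∀ y ∈ S j, ∃ k, T.parent^[k] y = z) ∧ T.parent z = T.root := by
  by_cases hj : T.root ∈ S j
  · refine ⟨T.root, hj, fun x hx _ => ?_,
      fun y hy => T.reach y (subset_biUnion_of_mem S (mem_univ j) hy), T.parent_root⟩
    by_cases hp : T.parent x = T.root
    · rwa [hp]
    · exact parent_mem_of_isBTree_combined hdisj hB hT hx hp
  · obtain ⟨z, hz, hzp, huniq, hsub⟩ :=
      exists_unique_child_root_of_isBTree_combined hdisj hB hT hj
    exact ⟨z, hz,
      fun x hx hne => parent_mem_of_isBTree_combined hdisj hB hT hx (mt (huniq x hx) hne),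
      fun y hy => (mem_filter.1 (hsub hy)).2, hzp⟩

theorem exists_graft_eq_of_isBTree_combined :
    ∃ (p : ∀ j, RTree (S j)) (i₀ : ι), graft hdisj p i₀ = T := by
  choose z hz hcl hreach hzp using exists_root_of_isBTree_combined hdisj hB hT
  obtain ⟨i₀, -, hi₀⟩ := mem_biUnion.1 T.root_mem
  obtain ⟨k, hk⟩ := hreach i₀ T.root hi₀
  exact ⟨fun j => T.restrict (S j) (z j) (hz j) (hcl j) (hreach j), i₀,
    graft_eq hdisj _ i₀ (hk.symm.trans (T.iterate_parent_root k)) hzp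
      fun j x hx hxz => T.restrict_parent (S j) (z j) (hz j) (hcl j) (hreach j) hx hxz⟩

end Decompose

end BTree

def bTrees (S : Finset ℕ) (B : Finset (Finset ℕ)) : Finset (RTree S) :=
  (Set.toFinite {T : RTree S | IsBTree S B T}).toFinset

theorem mem_bTrees {S : Finset ℕ} {B : Finset (Finset ℕ)} {T : RTree S} :
    T ∈ bTrees S B ↔ IsBTree S B T :=
  Set.Finite.mem_toFinset _

def hPoly (S : Finset ℕ) (B : Finset (Finset ℕ)) : ℤ[X] :=
  ∑ᶠ T ∈ {T : RTree S | IsBTree S B T}, X ^ T.des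

theorem hPoly_eq_sum (S : Finset ℕ) (B : Finset (Finset ℕ)) :
    hPoly S B = ∑ T ∈ bTrees S B, X ^ T.des :=
  finsum_mem_eq_finite_toFinset_sum _ _

section Combined

variable {ι : Type*} [Fintype ι] {S : ι → Finset ℕ} {B : ι → Finset (Finset ℕ)}
  (hdisj : Pairwise (Disjoint on S)) (hB : ∀ j, IsConnBuildingSet (S j) (B j))

include hB

theorem sum_bTrees_combinedBuildingSet {M : Type*} [AddCommMonoid M]
    (f : RTree (univ.biUnion S) → M) :
    ∑ T ∈ bTrees (univ.biUnion S) (combinedBuildingSet S B), f T =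
      ∑ a ∈ (Fintype.piFinset fun j => bTrees (S j) (B j)) ×ˢ univ,
        f (graft hdisj a.1 a.2) := by
  symm
  refine sum_bij (fun a _ => graft hdisj a.1 a.2) (fun a ha => ?_)
    (fun a _ b _ h => graft_injective hdisj h) (fun T hT => ?_) fun _ _ => rfl
  · rw [mem_product, Fintype.mem_piFinset] at ha
    exact mem_bTrees.2 (isBTree_graft hdisj hB a.2 fun j => mem_bTrees.1 (ha.1 j))
  · obtain ⟨p, i₀, rfl⟩ := exists_graft_eq_of_isBTree_combined hdisj hB (mem_bTrees.1 hT)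
    refine ⟨(p, i₀), mem_product.2 ⟨Fintype.mem_piFinset.2 fun j => ?_, mem_univ _⟩, rfl⟩
    exact mem_bTrees.2 (isBTree_of_isBTree_graft hdisj hB (mem_bTrees.1 hT) j)

include hdisj in
theorem hPoly_combinedBuildingSet :
    hPoly (univ.biUnion S) (combinedBuildingSet S B) =
      (∑ k ∈ range (Fintype.card ι), X ^ k) * ∏ j, hPoly (S j) (B j) := by
  simp_rw [hPoly_eq_sum, prod_univ_sum, mul_sum, sum_bTrees_combinedBuildingSet hdisj hB,
    sum_product]
  refine sum_congr rfl fun p _ => ?_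
  simp_rw [des_graft, pow_add, ← sum_mul, prod_pow_eq_pow_sum,
    sum_card_filter_lt_eq_sum_range (root_injective hdisj p)]

end Combined

theorem hPoly_combined_building_set_general
    (r : ℕ)
    (S : Fin r → Finset ℕ) (B : Fin r → Finset (Finset ℕ))
    (hdisj : ∀ i j, i ≠ j → Disjoint (S i) (S j))
    (hB : ∀ i, IsConnBuildingSet (S i) (B i))
    (Sc : Finset ℕ) (hSc : Sc = Finset.univ.biUnion S)
    (Bc : Finset (Finset ℕ)) (hBc : Bc = Finset.univ.biUnion B ∪ {Sc}) :
    (∑ᶠ T ∈ {T : RTree Sc | IsBTree Sc Bc T},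
        (Polynomial.X : Polynomial ℤ) ^ T.des)
      = (∑ i ∈ Finset.range r, (Polynomial.X : Polynomial ℤ) ^ i) *
        ∏ i : Fin r,
          ∑ᶠ T ∈ {T : RTree (S i) | IsBTree (S i) (B i) T},
            (Polynomial.X : Polynomial ℤ) ^ T.des := by
  subst hSc hBc
  have h := hPoly_combinedBuildingSet hdisj hB
  rwa [Fintype.card_fin] at h

/-- For connected building sets `B₁, …, B_r` on pairwise
disjoint finite sets `S₁, …, S_r`, the `h`-polynomial of the combined connected
building set `B = B₁ ⊔ ⋯ ⊔ B_r ⊔ {S}` on `S = S₁ ∪ ⋯ ∪ S_r` satisfies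
`h_B(t) = (1 + t + ⋯ + t^{r-1}) ∏ᵢ h_{Bᵢ}(t)` in `ℤ[t]`. -/
theorem hPoly_combined_building_set
    (r : ℕ) (hr : 0 < r)
    (S : Fin r → Finset ℕ) (B : Fin r → Finset (Finset ℕ))
    (hpos : ∀ i, ∀ x ∈ S i, 0 < x)
    (hdisj : ∀ i j, i ≠ j → Disjoint (S i) (S j))
    (hB : ∀ i, IsConnBuildingSet (S i) (B i))
    (Sc : Finset ℕ) (hSc : Sc = Finset.univ.biUnion S)
    (Bc : Finset (Finset ℕ)) (hBc : Bc = Finset.univ.biUnion B ∪ {Sc}) :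
    (∑ᶠ T ∈ {T : RTree Sc | IsBTree Sc Bc T},
        (Polynomial.X : Polynomial ℤ) ^ T.des)
      = (∑ i ∈ Finset.range r, (Polynomial.X : Polynomial ℤ) ^ i) *
        ∏ i : Fin r,
          ∑ᶠ T ∈ {T : RTree (S i) | IsBTree (S i) (B i) T},
            (Polynomial.X : Polynomial ℤ) ^ T.des :=
  hPoly_combined_building_set_general r S B hdisj hB Sc hSc Bc hBc
end
end

section
/- Let B be a connected building set on [n] = {1,…,n} that is invariant under the involution ω : [n] → [n], ω(i) = n − i + 1 (i.e., {ω(I) : I ∈ B} = B). Then the trivariate h-polynomial satisfies h_B(t,q,u) = t^{n−1} · h_B(t^{−1}, q^{−1}, qu), as an identity in the Laurent polynomial ring ℤ[t^{±1}, q^{±1}, u]. -/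
open scoped Classical

noncomputable section

namespace Pal

variable {n : ℕ}

local notation "S" => Finset.Icc 1 n

lemma om_mem {i : ℕ} (h : i ∈ S) : n + 1 - i ∈ S := by
  simp only [Finset.mem_Icc] at *; omega

lemma om_om {i : ℕ} (h : i ∈ S) : n + 1 - (n + 1 - i) = i := by
  simp only [Finset.mem_Icc] at h; omega

lemma iter_mem (T : RTree S) (k : ℕ) : ∀ i ∈ S, T.parent^[k] i ∈ S := by
  induction k with
  | zero => simpa using fun i h => h
  | succ k ih =>
    intro i hi
    rw [Function.iterate_succ_apply]
    exact ih _ (T.parent_mem i hi)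

/-- conjugated parent function -/
def cparent (T : RTree S) (i : ℕ) : ℕ :=
  if i ∈ S then n + 1 - T.parent (n + 1 - i) else i

lemma cparent_mem (T : RTree S) {i : ℕ} (h : i ∈ S) : cparent T i ∈ S := by
  rw [cparent, if_pos h]; exact om_mem (T.parent_mem _ (om_mem h))

lemma cparent_iter (T : RTree S) (k : ℕ) :
    ∀ i ∈ S, (cparent T)^[k] i = n + 1 - T.parent^[k] (n + 1 - i) := by
  induction k with
  | zero => intro i hi; simpa using (om_om hi).symm
  | succ k ih =>
    intro i hi
    rw [Function.iterate_succ_apply, Function.iterate_succ_apply]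
    have h1 : cparent T i = n + 1 - T.parent (n + 1 - i) := if_pos hi
    rw [h1] at *
    have h2 : T.parent (n + 1 - i) ∈ S := T.parent_mem _ (om_mem hi)
    rw [ih _ (om_mem h2), om_om h2]

/-- the conjugated tree -/
def conj (T : RTree S) : RTree S where
  root := n + 1 - T.root
  root_mem := om_mem T.root_mem
  parent := cparent T
  parent_out i h := if_neg h
  parent_root := by
    rw [cparent, if_pos (om_mem T.root_mem), om_om T.root_mem, T.parent_root]
  parent_mem i h := cparent_mem T h
  reach i h := by
    obtain ⟨k, hk⟩ := T.reach (n + 1 - i) (om_mem h)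
    exact ⟨k, by rw [cparent_iter T k i h, hk]⟩

lemma dp_conj (T : RTree S) {i : ℕ} (hi : i ∈ S) :
    (conj T).dp i = T.dp (n + 1 - i) := by
  unfold RTree.dp
  congr 1
  ext k
  simp only [Set.mem_setOf_eq]
  show (cparent T)^[k] i = n + 1 - T.root ↔ _
  rw [cparent_iter T k i hi]
  constructor
  · intro h
    have h2 : T.parent^[k] (n + 1 - i) ∈ S := iter_mem T k _ (om_mem hi)
    have := congrArg (fun x => n + 1 - x) h
    simpa [om_om h2, om_om T.root_mem] using this
  · intro h; rw [h]

lemma depth_conj (T : RTree S) : (conj T).depth = T.depth := by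
  unfold RTree.depth
  apply le_antisymm
  · apply Finset.sup_le
    intro i hi
    rw [dp_conj T hi]
    exact Finset.le_sup (om_mem hi)
  · apply Finset.sup_le
    intro i hi
    have : T.dp i = (conj T).dp (n + 1 - i) := by
      rw [dp_conj T (om_mem hi), om_om hi]
    rw [this]
    exact Finset.le_sup (om_mem hi)

lemma parent_ne (T : RTree S) {i : ℕ} (hi : i ∈ S) (hr : i ≠ T.root) :
    T.parent i ≠ i := by
  intro h
  obtain ⟨k, hk⟩ := T.reach i hi
  rw [Function.iterate_fixed h k] at hk
  exact hr hk

lemma injOn_om : ∀ a ∈ S, ∀ b ∈ S, n + 1 - a = n + 1 - b → a = b := by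
  intro a ha b hb h
  have := congrArg (fun x => n + 1 - x) h
  simpa [om_om ha, om_om hb] using this

/-- the ascent set of T -/
def ascSet (T : RTree S) : Finset ℕ :=
  Finset.filter (fun i => i ≠ T.root ∧ i < T.parent i) S

lemma desSet_conj (T : RTree S) :
    (conj T).desSet = (ascSet T).image (fun i => n + 1 - i) := by
  ext j
  simp only [RTree.desSet, ascSet, Finset.mem_image, Finset.mem_filter]
  constructor
  · rintro ⟨hj, hne, hlt⟩
    refine ⟨n + 1 - j, ⟨om_mem hj, ?_, ?_⟩, om_om hj⟩
    · intro h
      apply hne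
      show j = n + 1 - T.root
      rw [← h, om_om hj]
    · -- hlt : (conj T).parent j < j, (conj T).parent j = n+1 - T.parent (n+1-j)
      have h1 : (conj T).parent j = n + 1 - T.parent (n + 1 - j) := if_pos hj
      rw [h1] at hlt
      have h2 : T.parent (n + 1 - j) ∈ S := T.parent_mem _ (om_mem hj)
      simp only [Finset.mem_Icc] at h2 hj ⊢
      omega
  · rintro ⟨a, ⟨ha, hne, hlt⟩, rfl⟩
    refine ⟨om_mem ha, ?_, ?_⟩
    · show n + 1 - a ≠ n + 1 - T.root
      intro h
      exact hne (injOn_om a ha T.root T.root_mem h)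
    · have h1 : (conj T).parent (n + 1 - a) = n + 1 - T.parent a := by
        show cparent T (n + 1 - a) = _
        rw [cparent, if_pos (om_mem ha), om_om ha]
      rw [h1]
      have h2 : T.parent a ∈ S := T.parent_mem _ ha
      simp only [Finset.mem_Icc] at h2 ha ⊢
      omega


lemma card_S : (S).card = n := by simp

lemma ascSet_eq (T : RTree S) :
    ascSet T = Finset.filter (fun i => ¬ T.parent i < i)
      (Finset.filter (fun i => i ≠ T.root) S) := by
  rw [Finset.filter_filter, ascSet]
  apply Finset.filter_congr
  intro i hi
  simp only [and_congr_right_iff]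
  intro hne
  have := parent_ne T hi hne
  constructor
  · omega
  · omega

lemma desSet_eq (T : RTree S) :
    T.desSet = Finset.filter (fun i => T.parent i < i)
      (Finset.filter (fun i => i ≠ T.root) S) := by
  rw [Finset.filter_filter, RTree.desSet]

lemma des_add_des (T : RTree S) :
    T.des + (conj T).des = n - 1 := by
  have h1 : (conj T).des = (ascSet T).card := by
    rw [RTree.des, desSet_conj]
    apply Finset.card_image_of_injOn
    intro a ha b hb
    exact injOn_om a (Finset.filter_subset _ _ ha) b (Finset.filter_subset _ _ hb)
  rw [h1, RTree.des, desSet_eq, ascSet_eq]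
  have h2 := Finset.card_filter_add_card_filter_not
    (s := Finset.filter (fun i => i ≠ T.root) S) (fun i => T.parent i < i)
  rw [h2, Finset.filter_ne', Finset.card_erase_of_mem T.root_mem, card_S]

lemma term_conj (T : RTree S) {a : ℕ} (ha : a ∈ S) :
    (conj T).depth - (conj T).dp ((conj T).parent (n + 1 - a))
      = T.depth - T.dp (T.parent a) := by
  have h1 : (conj T).parent (n + 1 - a) = n + 1 - T.parent a := by
    show cparent T (n + 1 - a) = _
    rw [cparent, if_pos (om_mem ha), om_om ha]
  have h2 : T.parent a ∈ S := T.parent_mem _ ha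
  rw [h1, dp_conj T (om_mem h2), om_om h2, depth_conj]

lemma maj_conj (T : RTree S) :
    (conj T).maj = ∑ a ∈ ascSet T, (T.depth - T.dp (T.parent a)) := by
  rw [RTree.maj, desSet_conj, Finset.sum_image]
  · apply Finset.sum_congr rfl
    intro a ha
    exact term_conj T (Finset.filter_subset _ _ ha)
  · intro a ha b hb
    exact injOn_om a (Finset.filter_subset _ _ ha) b (Finset.filter_subset _ _ hb)

lemma maj_add_maj (T : RTree S) : T.maj + (conj T).maj = T.mu := by
  rw [maj_conj, RTree.maj, RTree.mu, desSet_eq, ascSet_eq]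
  exact Finset.sum_filter_add_sum_filter_not _ _ _

lemma filter_ne_image (T : RTree S) :
    (Finset.filter (fun i => i ≠ T.root) S).image (fun i => n + 1 - i)
      = Finset.filter (fun i => i ≠ n + 1 - T.root) S := by
  ext j
  simp only [Finset.mem_image, Finset.mem_filter]
  constructor
  · rintro ⟨a, ⟨ha, hne⟩, rfl⟩
    exact ⟨om_mem ha, fun h => hne (injOn_om a ha T.root T.root_mem h)⟩
  · rintro ⟨hj, hne⟩
    refine ⟨n + 1 - j, ⟨om_mem hj, ?_⟩, om_om hj⟩
    intro h
    rw [← h, om_om hj] at hne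
    exact hne rfl

lemma mu_conj (T : RTree S) : (conj T).mu = T.mu := by
  rw [RTree.mu, RTree.mu]
  have : Finset.filter (fun i => i ≠ (conj T).root) S
      = (Finset.filter (fun i => i ≠ T.root) S).image (fun i => n + 1 - i) := by
    rw [filter_ne_image]; rfl
  rw [this, Finset.sum_image]
  · apply Finset.sum_congr rfl
    intro a ha
    exact term_conj T (Finset.filter_subset _ _ ha)
  · intro a ha b hb
    exact injOn_om a (Finset.filter_subset _ _ ha) b (Finset.filter_subset _ _ hb)


lemma rtree_ext {S0 : Finset ℕ} (T1 T2 : RTree S0) (hr : T1.root = T2.root)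
    (hp : T1.parent = T2.parent) : T1 = T2 := by
  cases T1; cases T2; simp_all

lemma conj_conj (T : RTree S) : conj (conj T) = T := by
  apply rtree_ext
  · exact om_om T.root_mem
  · funext i
    by_cases hi : i ∈ S
    · show cparent (conj T) i = T.parent i
      rw [cparent, if_pos hi]
      show n + 1 - cparent T (n + 1 - i) = _
      rw [cparent, if_pos (om_mem hi), om_om hi]
      exact om_om (T.parent_mem i hi)
    · show cparent (conj T) i = T.parent i
      rw [cparent, if_neg hi, T.parent_out i hi]

lemma desc_conj (T : RTree S) {i : ℕ} (hi : i ∈ S) :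
    (conj T).desc i = (T.desc (n + 1 - i)).image (fun j => n + 1 - j) := by
  ext j
  simp only [RTree.desc, Finset.mem_image, Finset.mem_filter]
  constructor
  · rintro ⟨hj, k, hk⟩
    rw [show (conj T).parent^[k] j = (cparent T)^[k] j from rfl,
      cparent_iter T k j hj] at hk
    refine ⟨n + 1 - j, ⟨om_mem hj, k, ?_⟩, om_om hj⟩
    have h2 : T.parent^[k] (n + 1 - j) ∈ S := iter_mem T k _ (om_mem hj)
    have := congrArg (fun x => n + 1 - x) hk
    simpa [om_om h2] using this
  · rintro ⟨a, ⟨ha, k, hk⟩, rfl⟩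
    refine ⟨om_mem ha, k, ?_⟩
    rw [show (conj T).parent^[k] (n + 1 - a) = (cparent T)^[k] (n + 1 - a) from rfl,
      cparent_iter T k _ (om_mem ha), om_om ha, hk]
    exact om_om hi

lemma mem_image_om {X : Finset ℕ} (hX : X ⊆ S) {a : ℕ} (ha : a ∈ S) :
    a ∈ X.image (fun j => n + 1 - j) ↔ n + 1 - a ∈ X := by
  simp only [Finset.mem_image]
  constructor
  · rintro ⟨x, hx, rfl⟩
    rwa [om_om (hX hx)]
  · intro h
    exact ⟨n + 1 - a, h, om_om ha⟩

lemma image_om_image_om {X : Finset ℕ} (hX : X ⊆ S) :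
    (X.image (fun j => n + 1 - j)).image (fun j => n + 1 - j) = X := by
  ext a
  simp only [Finset.mem_image, exists_exists_and_eq_and]
  constructor
  · rintro ⟨x, hx, rfl⟩
    rwa [om_om (hX hx)]
  · intro h
    exact ⟨a, h, om_om (hX h)⟩

variable {B : Finset (Finset ℕ)}

lemma image_om_mem (hinv : B.image (fun I => I.image fun i => n + 1 - i) = B)
    {I : Finset ℕ} (hI : I ∈ B) : I.image (fun i => n + 1 - i) ∈ B := by
  rw [← hinv]
  exact Finset.mem_image_of_mem _ hI

lemma desc_subset (T : RTree S) (i : ℕ) : T.desc i ⊆ S := Finset.filter_subset _ _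

lemma isBTree_conj (hinv : B.image (fun I => I.image fun i => n + 1 - i) = B)
    {T : RTree S} (hT : IsBTree S B T) : IsBTree S B (conj T) := by
  constructor
  · intro i hi
    rw [desc_conj T hi]
    exact image_om_mem hinv (hT.1 _ (om_mem hi))
  · intro I hIS hcard hinc hmem
    apply hT.2 (I.image (fun i => n + 1 - i))
    · intro j hj
      simp only [Finset.mem_image] at hj
      obtain ⟨a, ha, rfl⟩ := hj
      exact om_mem (hIS ha)
    · rwa [Finset.card_image_of_injOn (fun a ha b hb => injOn_om a (hIS ha) b (hIS hb))]
    · intro i hi j hj hij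
      simp only [Finset.mem_image] at hi hj
      obtain ⟨a, ha, rfl⟩ := hi
      obtain ⟨b, hb, rfl⟩ := hj
      have hab : a ≠ b := fun h => hij (by rw [h])
      obtain ⟨h1, h2⟩ := hinc a ha b hb hab
      constructor
      · intro hmem2
        apply h1
        rw [desc_conj T (hIS hb), mem_image_om (desc_subset T _) (hIS ha)]
        exact hmem2
      · intro hmem2
        apply h2
        rw [desc_conj T (hIS ha), mem_image_om (desc_subset T _) (hIS hb)]
        exact hmem2
    · -- (I.image om).biUnion T.desc ∈ B
      have key : (I.image (fun i => n + 1 - i)).biUnion T.desc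
          = (I.biUnion (conj T).desc).image (fun j => n + 1 - j) := by
        ext j
        simp only [Finset.mem_biUnion, Finset.mem_image, exists_exists_and_eq_and]
        constructor
        · rintro ⟨a, ha, hj⟩
          have hjS : j ∈ S := desc_subset T _ hj
          refine ⟨n + 1 - j, ⟨a, ha, ?_⟩, om_om hjS⟩
          rw [desc_conj T (hIS ha), mem_image_om (desc_subset T _) (om_mem hjS), om_om hjS]
          exact hj
        · rintro ⟨x, ⟨a, ha, hx⟩, rfl⟩
          rw [desc_conj T (hIS ha)] at hx
          obtain ⟨y, hy, rfl⟩ := Finset.mem_image.1 hx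
          refine ⟨a, ha, ?_⟩
          rwa [om_om (desc_subset T _ hy)]
      rw [key]
      exact image_om_mem hinv hmem


lemma rtree_finite (S' : Finset ℕ) : Finite (RTree S') := by
  let f : RTree S' → ({x // x ∈ S'} × ({x // x ∈ S'} → {x // x ∈ S'})) :=
    fun T => (⟨T.root, T.root_mem⟩, fun i => ⟨T.parent i, T.parent_mem i i.2⟩)
  have hf : Function.Injective f := by
    intro T1 T2 h
    have h1 := congrArg Prod.fst h
    have h2 := congrArg Prod.snd h
    refine rtree_ext T1 T2 ?_ ?_
    · exact congrArg Subtype.val h1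
    · funext i
      by_cases hi : i ∈ S'
      · exact congrArg Subtype.val (congrFun h2 ⟨i, hi⟩)
      · rw [T1.parent_out i hi, T2.parent_out i hi]
  exact Finite.of_injective f hf

lemma key_alg {R : Type} [CommRing R] (t q : Rˣ) (u : R) (d dc m mc : ℕ) :
    (t : R) ^ d * (q : R) ^ m * u ^ (m + mc)
      = (t : R) ^ (d + dc) *
        (((t⁻¹ : Rˣ) : R) ^ dc * ((q⁻¹ : Rˣ) : R) ^ mc * ((q : R) * u) ^ (m + mc)) := by
  have ht : (t : R) ^ dc * ((t⁻¹ : Rˣ) : R) ^ dc = 1 := by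
    rw [← mul_pow, ← Units.val_mul]; simp
  have hq : (q : R) ^ mc * ((q⁻¹ : Rˣ) : R) ^ mc = 1 := by
    rw [← mul_pow, ← Units.val_mul]; simp
  linear_combination
    (-((t : R) ^ d * (q : R) ^ m * u ^ (m + mc) *
        ((q : R) ^ mc * ((q⁻¹ : Rˣ) : R) ^ mc))) * ht +
    (-((t : R) ^ d * (q : R) ^ m * u ^ (m + mc))) * hq

end Pal

/-- If the connected building set `B` on `[n] = {1,…,n}` is
invariant under the involution `ω(i) = n − i + 1`, then the trivariate
`h`-polynomial satisfies `h_B(t,q,u) = t^{n−1} h_B(t⁻¹, q⁻¹, qu)`, as an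
identity in `ℤ[t^{±1}, q^{±1}, u]`; equivalently (as stated here), the identity
holds in every commutative ring for all units `t, q` and every element `u`. -/
theorem trivariate_hPoly_involution_palindromic
    (n : ℕ) (B : Finset (Finset ℕ))
    (hB : IsConnBuildingSet (Finset.Icc 1 n) B)
    (hinv : B.image (fun I => I.image fun i => n + 1 - i) = B)
    (R : Type) [CommRing R] (t q : Rˣ) (u : R) :
    (∑ᶠ T ∈ {T : RTree (Finset.Icc 1 n) | IsBTree (Finset.Icc 1 n) B T},
        (t : R) ^ T.des * (q : R) ^ T.maj * u ^ T.mu)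
      = (t : R) ^ (n - 1) *
        ∑ᶠ T ∈ {T : RTree (Finset.Icc 1 n) | IsBTree (Finset.Icc 1 n) B T},
          ((t⁻¹ : Rˣ) : R) ^ T.des * ((q⁻¹ : Rˣ) : R) ^ T.maj *
            ((q : R) * u) ^ T.mu := by
  have hfin : Finite (RTree (Finset.Icc 1 n)) := Pal.rtree_finite _
  haveI : Fintype ↥{T : RTree (Finset.Icc 1 n) | IsBTree (Finset.Icc 1 n) B T} :=
    Fintype.ofFinite _
  rw [finsum_mem_eq_toFinset_sum, finsum_mem_eq_toFinset_sum, Finset.mul_sum]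
  refine Finset.sum_nbij' (i := Pal.conj) (j := Pal.conj) ?_ ?_ ?_ ?_ ?_
  · intro T hT
    rw [Set.mem_toFinset] at *
    exact Pal.isBTree_conj hinv hT
  · intro T hT
    rw [Set.mem_toFinset] at *
    exact Pal.isBTree_conj hinv hT
  · intro T _
    exact Pal.conj_conj T
  · intro T _
    exact Pal.conj_conj T
  · intro T hT
    have h1 := Pal.des_add_des T
    have h2 := Pal.maj_add_maj T
    have h3 := Pal.mu_conj T
    rw [h3, ← h1, ← h2]
    exact Pal.key_alg t q u T.des (Pal.conj T).des T.maj (Pal.conj T).maj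
end
end

section
/- Let B be a connected building set on [n] = {1,…,n} invariant under the involution ω : [n] → [n], ω(i) = n − i + 1, and let T be a B-tree. Then the tree ω(T) obtained from T by relabeling each vertex x as ω(x) is again a B-tree; moreover an edge of ω(T) is a descent if and only if the corresponding edge of T is not a descent, so that des(ω(T)) = n − 1 − des(T), maj(ω(T)) = μ(T) − maj(T), and μ(ω(T)) = μ(T). -/
open scoped Classical

noncomputable section

namespace OmegaFlip

variable (n : ℕ)

/-- The involution `ω`. -/
def w (x : ℕ) : ℕ := n + 1 - x

/-- The ground set. -/
abbrev S : Finset ℕ := Finset.Icc 1 n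

lemma mem_S {x : ℕ} : x ∈ S n ↔ 1 ≤ x ∧ x ≤ n := Finset.mem_Icc

lemma w_mem {x : ℕ} (h : x ∈ S n) : w n x ∈ S n := by
  rw [mem_S] at h ⊢; unfold w; omega

lemma w_w {x : ℕ} (h : x ∈ S n) : w n (w n x) = x := by
  rw [mem_S] at h; unfold w; omega

lemma w_inj {x y : ℕ} (hx : x ∈ S n) (hy : y ∈ S n) (h : w n x = w n y) : x = y := by
  rw [mem_S] at hx hy; unfold w at h; omega

lemma w_lt {x y : ℕ} (hx : x ∈ S n) (hy : y ∈ S n) : w n x < w n y ↔ y < x := by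
  rw [mem_S] at hx hy; unfold w; omega

lemma image_w : (S n).image (w n) = S n := by
  ext x
  simp only [Finset.mem_image, mem_S]
  constructor
  · rintro ⟨y, hy, rfl⟩; unfold w; omega
  · intro hx; exact ⟨w n x, by unfold w; omega, by unfold w; omega⟩

lemma image_w_image_w {X : Finset ℕ} (hX : X ⊆ S n) :
    (X.image (w n)).image (w n) = X := by
  rw [Finset.image_image]
  have : X.image (w n ∘ w n) = X.image id :=
    Finset.image_congr fun x hx => w_w n (hX hx)
  rw [this, Finset.image_id]

variable {n}

lemma iter_mem (T : RTree (S n)) {i : ℕ} (h : i ∈ S n) (k : ℕ) :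
    T.parent^[k] i ∈ S n := by
  induction k with
  | zero => simpa using h
  | succ k ih => rw [Function.iterate_succ_apply']; exact T.parent_mem _ ih

lemma parent_ne (T : RTree (S n)) {i : ℕ} (h : i ∈ S n) (hne : i ≠ T.root) :
    T.parent i ≠ i := by
  intro hfix
  obtain ⟨k, hk⟩ := T.reach i h
  rw [Function.iterate_fixed hfix] at hk
  exact hne hk

/-- The parent function of the relabeled tree. -/
def fp (T : RTree (S n)) (x : ℕ) : ℕ :=
  if x ∈ S n then w n (T.parent (w n x)) else x

lemma fp_iter (T : RTree (S n)) {x : ℕ} (hx : x ∈ S n) (k : ℕ) :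
    (fp T)^[k] x = w n (T.parent^[k] (w n x)) := by
  induction k with
  | zero => simp [w_w n hx]
  | succ k ih =>
    rw [Function.iterate_succ_apply', ih]
    have hy : T.parent^[k] (w n x) ∈ S n := iter_mem T (w_mem n hx) k
    rw [fp, if_pos (w_mem n hy), w_w n hy, Function.iterate_succ_apply']

/-- The relabeled tree `ω(T)`. -/
def flip (T : RTree (S n)) : RTree (S n) where
  root := w n T.root
  root_mem := w_mem n T.root_mem
  parent := fp T
  parent_out := fun i hi => if_neg hi
  parent_root := by
    rw [fp, if_pos (w_mem n T.root_mem), w_w n T.root_mem, T.parent_root]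
  parent_mem := fun i hi => by
    rw [fp, if_pos hi]; exact w_mem n (T.parent_mem _ (w_mem n hi))
  reach := by
    intro i hi
    obtain ⟨k, hk⟩ := T.reach (w n i) (w_mem n hi)
    exact ⟨k, by rw [show (fp T)^[k] i = w n (T.parent^[k] (w n i)) from fp_iter T hi k, hk]⟩

lemma flip_iter (T : RTree (S n)) {x : ℕ} (hx : x ∈ S n) (k : ℕ) :
    (flip T).parent^[k] x = w n (T.parent^[k] (w n x)) := fp_iter T hx k

lemma flip_parent (T : RTree (S n)) {x : ℕ} (hx : x ∈ S n) :
    (flip T).parent x = w n (T.parent (w n x)) := by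
  show fp T x = _
  rw [fp, if_pos hx]

lemma flip_root (T : RTree (S n)) : (flip T).root = w n T.root := rfl

lemma desc_subset (T : RTree (S n)) (j : ℕ) : T.desc j ⊆ S n :=
  Finset.filter_subset _ _

lemma flip_desc (T : RTree (S n)) {i : ℕ} (hi : i ∈ S n) :
    (flip T).desc i = (T.desc (w n i)).image (w n) := by
  ext j
  simp only [RTree.desc, Finset.mem_image, Finset.mem_filter]
  constructor
  · rintro ⟨hj, k, hk⟩
    have hk' : w n (T.parent^[k] (w n j)) = i := by
      rw [← flip_iter T hj k]; exact hk
    have hm : T.parent^[k] (w n j) ∈ S n := iter_mem T (w_mem n hj) k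
    have : T.parent^[k] (w n j) = w n i := by
      rw [← hk', w_w n hm]
    exact ⟨w n j, ⟨w_mem n hj, k, this⟩, w_w n hj⟩
  · rintro ⟨m, ⟨hm, k, hk⟩, rfl⟩
    refine ⟨w_mem n hm, k, ?_⟩
    rw [flip_iter T (w_mem n hm) k, w_w n hm, hk, w_w n hi]

lemma mem_desc_flip (T : RTree (S n)) {x j : ℕ} (hx : x ∈ S n) (hj : j ∈ S n) :
    x ∈ T.desc j ↔ w n x ∈ (flip T).desc (w n j) := by
  rw [flip_desc T (w_mem n hj), w_w n hj]
  constructor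
  · intro h; exact Finset.mem_image_of_mem _ h
  · intro h
    obtain ⟨m, hm, hmx⟩ := Finset.mem_image.mp h
    rwa [w_inj n (desc_subset T j hm) hx hmx] at hm

lemma flip_dp (T : RTree (S n)) {x : ℕ} (hx : x ∈ S n) :
    (flip T).dp x = T.dp (w n x) := by
  rw [RTree.dp, RTree.dp]
  congr 1
  ext k
  simp only [Set.mem_setOf_eq]
  have h1 : (flip T).parent^[k] x = w n (T.parent^[k] (w n x)) := flip_iter T hx k
  have hm : T.parent^[k] (w n x) ∈ S n := iter_mem T (w_mem n hx) k
  rw [h1, flip_root]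
  constructor
  · intro h; exact w_inj n hm T.root_mem h
  · intro h; rw [h]

lemma flip_depth (T : RTree (S n)) : (flip T).depth = T.depth := by
  have h1 : (flip T).depth = ((S n).image (w n)).sup T.dp := by
    rw [Finset.sup_image]
    exact Finset.sup_congr rfl fun x hx => flip_dp T hx
  rw [h1, image_w]
  rfl

/-- The set of non-root vertices of `T`. -/
def N (T : RTree (S n)) : Finset ℕ := (S n).filter fun i => i ≠ T.root

lemma desSet_subset_N (T : RTree (S n)) : T.desSet ⊆ N T := by
  intro x hx
  rw [RTree.desSet, Finset.mem_filter] at hx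
  exact Finset.mem_filter.mpr ⟨hx.1, hx.2.1⟩

lemma card_N (T : RTree (S n)) : (N T).card = n - 1 := by
  rw [N, Finset.filter_ne', Finset.card_erase_of_mem T.root_mem, Nat.card_Icc]
  omega

lemma flip_desSet (T : RTree (S n)) :
    (flip T).desSet = (N T \ T.desSet).image (w n) := by
  ext j
  simp only [RTree.desSet, N, Finset.mem_image, Finset.mem_sdiff, Finset.mem_filter]
  constructor
  · rintro ⟨hj, hjr, hlt⟩
    have hc : w n j ∈ S n := w_mem n hj
    have hcr : w n j ≠ T.root := by
      intro h
      apply hjr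
      rw [flip_root, ← h, w_w n hj]
    have hq : T.parent (w n j) ∈ S n := T.parent_mem _ hc
    have hlt' : w n (T.parent (w n j)) < j := by rwa [flip_parent T hj] at hlt
    have hlt'' : w n j < T.parent (w n j) := by
      rw [← w_lt n hq hc]
      rw [w_w n hj]; exact hlt'
    exact ⟨w n j, ⟨⟨hc, hcr⟩, fun h => absurd h.2.2 (by omega)⟩, w_w n hj⟩
  · rintro ⟨d, ⟨⟨hd, hdr⟩, hnd⟩, rfl⟩
    have hq : T.parent d ∈ S n := T.parent_mem _ hd
    have hpd : ¬ T.parent d < d := fun h => hnd ⟨hd, hdr, h⟩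
    have hne : T.parent d ≠ d := parent_ne T hd hdr
    refine ⟨w_mem n hd, ?_, ?_⟩
    · intro h
      rw [flip_root] at h
      exact hdr (w_inj n hd T.root_mem h)
    · rw [flip_parent T (w_mem n hd), w_w n hd, w_lt n hq hd]
      omega

lemma filter_ne_flip_root (T : RTree (S n)) :
    ((S n).filter fun i => i ≠ (flip T).root) = (N T).image (w n) := by
  ext j
  simp only [N, Finset.mem_image, Finset.mem_filter]
  constructor
  · rintro ⟨hj, hjr⟩
    refine ⟨w n j, ⟨w_mem n hj, ?_⟩, w_w n hj⟩
    intro h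
    apply hjr
    rw [flip_root, ← h, w_w n hj]
  · rintro ⟨d, ⟨hd, hdr⟩, rfl⟩
    refine ⟨w_mem n hd, ?_⟩
    intro h
    rw [flip_root] at h
    exact hdr (w_inj n hd T.root_mem h)

lemma flip_term (T : RTree (S n)) {d : ℕ} (hd : d ∈ S n) :
    (flip T).depth - (flip T).dp ((flip T).parent (w n d)) =
      T.depth - T.dp (T.parent d) := by
  have hq : T.parent d ∈ S n := T.parent_mem _ hd
  have h1 : (flip T).parent (w n d) = w n (T.parent d) := by
    rw [flip_parent T (w_mem n hd), w_w n hd]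
  rw [h1, flip_dp T (w_mem n hq), w_w n hq, flip_depth]

end OmegaFlip

/-- If the connected building set `B` on `[n]` is invariant
under `ω(i) = n − i + 1` and `T` is a `B`-tree, then the relabeled tree `ω(T)`
is again a `B`-tree, an edge of `ω(T)` is a descent iff the corresponding edge
of `T` is not, and `des(ω(T)) = n − 1 − des(T)`,
`maj(ω(T)) = μ(T) − maj(T)`, `μ(ω(T)) = μ(T)`. -/
theorem omega_relabeled_BTree
    (n : ℕ) (B : Finset (Finset ℕ))
    (hB : IsConnBuildingSet (Finset.Icc 1 n) B)
    (hinv : B.image (fun I => I.image fun i => n + 1 - i) = B)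
    (T : RTree (Finset.Icc 1 n)) (hT : IsBTree (Finset.Icc 1 n) B T) :
    ∃ T' : RTree (Finset.Icc 1 n),
      -- `T'` is the tree `ω(T)`, obtained by relabeling each vertex `x` as `ω(x)`
      T'.root = n + 1 - T.root ∧
      (∀ x ∈ Finset.Icc 1 n, T'.parent x = n + 1 - T.parent (n + 1 - x)) ∧
      -- `ω(T)` is again a `B`-tree
      IsBTree (Finset.Icc 1 n) B T' ∧
      -- an edge of `ω(T)` is a descent iff the corresponding edge of `T` is not
      (∀ x ∈ Finset.Icc 1 n, x ≠ T'.root →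
        (T'.parent x < x ↔ ¬ T.parent (n + 1 - x) < n + 1 - x)) ∧
      T'.des = n - 1 - T.des ∧ T'.maj = T.mu - T.maj ∧ T'.mu = T.mu := by
  classical
  open OmegaFlip in
  refine ⟨flip T, rfl, ?_, ?_, ?_, ?_, ?_, ?_⟩
  · -- parent formula
    intro x hx
    rw [flip_parent T hx]
    rfl
  · -- B-tree
    have himg : ∀ J ∈ B, J.image (w n) ∈ B := by
      intro J hJ
      have : J.image (fun i => n + 1 - i) ∈ B := by
        rw [← hinv]
        exact Finset.mem_image_of_mem _ hJ
      exact this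
    constructor
    · intro i hi
      rw [flip_desc T hi]
      exact himg _ (hT.1 _ (w_mem n hi))
    · intro I hIS hcard hinc hmem
      -- transfer to T
      set I' : Finset ℕ := I.image (w n) with hI'
      have hinjI : ∀ x ∈ I, ∀ y ∈ I, w n x = w n y → x = y :=
        fun x hx y hy h => w_inj n (hIS hx) (hIS hy) h
      have hI'S : I' ⊆ S n := by
        intro a ha
        obtain ⟨b, hb, rfl⟩ := Finset.mem_image.mp ha
        exact w_mem n (hIS hb)
      have hcard' : 2 ≤ I'.card := by
        rw [hI', Finset.card_image_of_injOn hinjI]; exact hcard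
      have hinc' : ∀ a ∈ I', ∀ b ∈ I', a ≠ b → a ∉ T.desc b ∧ b ∉ T.desc a := by
        rintro a ha b hb hab
        obtain ⟨i, hi, rfl⟩ := Finset.mem_image.mp ha
        obtain ⟨j, hj, rfl⟩ := Finset.mem_image.mp hb
        have hij : i ≠ j := fun h => hab (by rw [h])
        have h1 := hinc i hi j hj hij
        constructor
        · intro h
          rw [mem_desc_flip T (w_mem n (hIS hi)) (w_mem n (hIS hj)),
            w_w n (hIS hi), w_w n (hIS hj)] at h
          exact h1.1 h
        · intro h
          rw [mem_desc_flip T (w_mem n (hIS hj)) (w_mem n (hIS hi)),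
            w_w n (hIS hi), w_w n (hIS hj)] at h
          exact h1.2 h
      apply hT.2 I' hI'S hcard' hinc'
      have hkey : I'.biUnion T.desc = (I.biUnion (flip T).desc).image (w n) := by
        rw [hI', Finset.biUnion_image, Finset.image_biUnion]
        apply Finset.biUnion_congr rfl
        intro a ha
        rw [flip_desc T (hIS ha), image_w_image_w n (desc_subset T (w n a))]
      rw [hkey]
      exact himg _ hmem
  · -- descent characterization
    intro x hx hxr
    rw [flip_parent T hx]
    have hc : w n x ∈ S n := w_mem n hx
    have hq : T.parent (w n x) ∈ S n := T.parent_mem _ hc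
    have hcr : w n x ≠ T.root := by
      intro h
      apply hxr
      rw [flip_root, ← h, w_w n hx]
    have hne : T.parent (w n x) ≠ w n x := parent_ne T hc hcr
    rw [mem_S] at hx hc hq
    show w n (T.parent (w n x)) < x ↔ ¬ T.parent (n + 1 - x) < n + 1 - x
    have hwx : w n x = n + 1 - x := rfl
    rw [hwx] at hne hc hq ⊢
    unfold w
    omega
  · -- des
    have hinjD : ∀ x ∈ N T \ T.desSet, ∀ y ∈ N T \ T.desSet, w n x = w n y → x = y := by
      intro x hx y hy h
      have hx' : x ∈ S n := (Finset.mem_filter.mp (Finset.mem_sdiff.mp hx).1).1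
      have hy' : y ∈ S n := (Finset.mem_filter.mp (Finset.mem_sdiff.mp hy).1).1
      exact w_inj n hx' hy' h
    rw [RTree.des, flip_desSet, Finset.card_image_of_injOn hinjD,
      Finset.card_sdiff_of_subset (desSet_subset_N T), card_N T]
    rfl
  · -- maj
    have hinjD : ∀ x ∈ N T \ T.desSet, ∀ y ∈ N T \ T.desSet, w n x = w n y → x = y := by
      intro x hx y hy h
      have hx' : x ∈ S n := (Finset.mem_filter.mp (Finset.mem_sdiff.mp hx).1).1
      have hy' : y ∈ S n := (Finset.mem_filter.mp (Finset.mem_sdiff.mp hy).1).1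
      exact w_inj n hx' hy' h
    rw [RTree.maj, flip_desSet, Finset.sum_image hinjD]
    have hsum : ∑ d ∈ N T \ T.desSet, ((flip T).depth - (flip T).dp ((flip T).parent (w n d)))
        = ∑ d ∈ N T \ T.desSet, (T.depth - T.dp (T.parent d)) := by
      apply Finset.sum_congr rfl
      intro d hd
      have hd' : d ∈ S n := (Finset.mem_filter.mp (Finset.mem_sdiff.mp hd).1).1
      exact flip_term T hd'
    rw [hsum]
    have hsd : ∑ d ∈ N T \ T.desSet, (T.depth - T.dp (T.parent d))
        + ∑ d ∈ T.desSet, (T.depth - T.dp (T.parent d))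
        = ∑ d ∈ N T, (T.depth - T.dp (T.parent d)) :=
      Finset.sum_sdiff (desSet_subset_N T)
    have hmu : T.mu = ∑ d ∈ N T, (T.depth - T.dp (T.parent d)) := rfl
    have hmaj : T.maj = ∑ d ∈ T.desSet, (T.depth - T.dp (T.parent d)) := rfl
    omega
  · -- mu
    have hinjN : ∀ x ∈ N T, ∀ y ∈ N T, w n x = w n y → x = y := by
      intro x hx y hy h
      exact w_inj n (Finset.mem_filter.mp hx).1 (Finset.mem_filter.mp hy).1 h
    rw [RTree.mu]
    rw [show ((S n).filter fun i => i ≠ (flip T).root) = (N T).image (w n) from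
      filter_ne_flip_root T]
    rw [Finset.sum_image hinjN]
    have hsum : ∑ d ∈ N T, ((flip T).depth - (flip T).dp ((flip T).parent (w n d)))
        = ∑ d ∈ N T, (T.depth - T.dp (T.parent d)) := by
      apply Finset.sum_congr rfl
      intro d hd
      exact flip_term T (Finset.mem_filter.mp hd).1
    rw [hsum]
    rfl
end
end

section
/- A connected building set B on [n] = {1,…,n} (with n ≥ 2) is invariant under the natural action of the symmetric group S_n on subsets of [n] if and only if there exists k with 2 ≤ k ≤ n such that B consists of all singletons {i}, i ∈ [n], together with all subsets of [n] of cardinality j for every j with k ≤ j ≤ n. -/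
open scoped Classical

noncomputable section

/-!
If `B` is `S_n`-invariant, then with `k` the least size of a non-singleton member of `B`
(which exists since `[n] ∈ B`), transitivity of `S_n` on `k`-subsets puts every `k`-subset
into `B`. Every larger subset `J` is then in `B` by induction on `|J|`: removing two different
points gives two members of `B` of size `|J| - 1 ≥ k` that still meet, and their union is `J`.
Conversely, permutations preserve singletons, subsets of `[n]` and cardinalities.
-/

open Finset Equiv

section Perm

variable {α : Type*} [DecidableEq α]

theorem Finset.exists_perm_image_eq_of_card_eq {S I J : Finset α}
    (hI : I ⊆ S) (hJ : J ⊆ S) (hIJ : I.card = J.card) :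
    ∃ σ : Perm α, (∀ i ∈ S, σ i ∈ S) ∧ I.image σ = J := by
  have hcard : (I.subtype (· ∈ S)).card = (J.subtype (· ∈ S)).card := by
    rwa [card_subtype, card_subtype, filter_true_of_mem hI, filter_true_of_mem hJ]
  obtain ⟨g, hg⟩ := (Set.powersetCard.isPretransitive (α := S)).exists_smul_eq
    (⟨_, hcard⟩ : Set.powersetCard S _) ⟨_, rfl⟩
  refine ⟨Perm.ofSubtype g, fun i hi => ?_, ?_⟩
  · rw [Perm.ofSubtype_apply_of_mem g hi]
    exact (g ⟨i, hi⟩).2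
  · have hg' : (I.subtype (· ∈ S)).image g = J.subtype (· ∈ S) := by
      simpa [Subtype.ext_iff, Finset.smul_finset_def] using hg
    conv_lhs => rw [← subtype_map_of_mem hI]
    rw [← subtype_map_of_mem hJ, ← hg', map_eq_image, map_eq_image, image_image, image_image]
    exact image_congr fun x _ => Perm.ofSubtype_apply_coe g x

theorem mem_of_card_eq_of_perm_invariant {S : Finset α} {B : Finset (Finset α)}
    (hinv : ∀ σ : Perm α, (∀ i ∈ S, σ i ∈ S) → ∀ I ∈ B, I.image σ ∈ B)
    {I J : Finset α} (hI : I ∈ B) (hIS : I ⊆ S) (hJS : J ⊆ S) (hIJ : I.card = J.card) :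
    J ∈ B := by
  obtain ⟨σ, hσS, rfl⟩ := exists_perm_image_eq_of_card_eq hIS hJS hIJ
  exact hinv σ hσS I hI

end Perm

section UniformBuildingSet

variable {α : Type*} [DecidableEq α]

def uniformBuildingSet (S : Finset α) (k : ℕ) : Finset (Finset α) :=
  S.image (fun i => ({i} : Finset α)) ∪ S.powerset.filter fun I => k ≤ I.card

theorem mem_uniformBuildingSet {S I : Finset α} {k : ℕ} :
    I ∈ uniformBuildingSet S k ↔ (∃ i ∈ S, {i} = I) ∨ (I ⊆ S ∧ k ≤ I.card) := by
  simp only [uniformBuildingSet, mem_union, mem_image, mem_filter, mem_powerset]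

theorem image_mem_uniformBuildingSet {S I : Finset α} {k : ℕ} {f : α → α}
    (hf : Function.Injective f) (hfS : ∀ i ∈ S, f i ∈ S) (hI : I ∈ uniformBuildingSet S k) :
    I.image f ∈ uniformBuildingSet S k := by
  rw [mem_uniformBuildingSet] at hI ⊢
  rcases hI with ⟨i, hi, rfl⟩ | ⟨hIS, hkI⟩
  · exact Or.inl ⟨f i, hfS i hi, by rw [image_singleton]⟩
  · refine Or.inr ⟨fun x hx => ?_, by rwa [card_image_of_injective I hf]⟩
    obtain ⟨y, hy, rfl⟩ := mem_image.mp hx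
    exact hfS y (hIS hy)

end UniformBuildingSet

namespace IsBuildingSet

variable {S : Finset ℕ} {B : Finset (Finset ℕ)} {k : ℕ}

theorem mem_of_le_card (hB : IsBuildingSet S B) (hk : 2 ≤ k)
    (hbase : ∀ J ⊆ S, J.card = k → J ∈ B) {J : Finset ℕ} (hJS : J ⊆ S) (hkJ : k ≤ J.card) :
    J ∈ B := by
  suffices ∀ j, k ≤ j → ∀ J ⊆ S, J.card = j → J ∈ B from this _ hkJ J hJS rfl
  intro j hkj
  induction j, hkj using Nat.le_induction with
  | base => exact hbase
  | succ j hkj ih =>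
    intro J hJS hj
    obtain ⟨a, ha, b, hb, c, hc, hab, hac, hbc⟩ := two_lt_card.mp (by omega : 2 < J.card)
    have herase : ∀ x ∈ J, J.erase x ∈ B := fun x hx =>
      ih _ ((erase_subset x J).trans hJS) (by rw [card_erase_of_mem hx, hj, Nat.add_sub_cancel])
    have hmeet : (J.erase a ∩ J.erase b).Nonempty :=
      ⟨c, mem_inter.mpr ⟨mem_erase.mpr ⟨hac.symm, hc⟩, mem_erase.mpr ⟨hbc.symm, hc⟩⟩⟩
    have hunion : J.erase a ∪ J.erase b = J := by
      ext x
      by_cases hxa : x = a <;> simp_all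
    simpa only [hunion] using hB.2.1 _ (herase a ha) _ (herase b hb) hmeet

theorem eq_uniformBuildingSet (hB : IsBuildingSet S B) (hk : 2 ≤ k)
    (hbase : ∀ J ⊆ S, J.card = k → J ∈ B) (hmin : ∀ I ∈ B, 2 ≤ I.card → k ≤ I.card) :
    B = uniformBuildingSet S k := by
  ext I
  rw [mem_uniformBuildingSet]
  constructor
  · intro hI
    obtain ⟨hIS, hIne⟩ := hB.1 I hI
    rcases (one_le_card.mpr hIne).eq_or_lt with h1 | h2
    · obtain ⟨i, rfl⟩ := card_eq_one.mp h1.symm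
      exact Or.inl ⟨i, hIS (mem_singleton_self i), rfl⟩
    · exact Or.inr ⟨hIS, hmin I hI h2⟩
  · rintro (⟨i, hi, rfl⟩ | ⟨hIS, hkI⟩)
    · exact hB.2.2 i hi
    · exact hB.mem_of_le_card hk hbase hIS hkI

end IsBuildingSet

/-- A connected building set `B` on `[n]` (`n ≥ 2`) is
invariant under the natural `S_n`-action on subsets of `[n]` iff there is
`2 ≤ k ≤ n` with `B` consisting of all singletons together with all subsets of
cardinality `j` for every `k ≤ j ≤ n`. -/
theorem Sn_invariant_building_set_iff
    (n : ℕ) (hn : 2 ≤ n)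
    (B : Finset (Finset ℕ))
    (hB : IsConnBuildingSet (Finset.Icc 1 n) B) :
    (∀ σ : Equiv.Perm ℕ, (∀ i ∈ Finset.Icc 1 n, σ i ∈ Finset.Icc 1 n) →
        ∀ I ∈ B, I.image σ ∈ B) ↔
      ∃ k, 2 ≤ k ∧ k ≤ n ∧
        B = (Finset.Icc 1 n).image (fun i => ({i} : Finset ℕ)) ∪
            ((Finset.Icc 1 n).powerset.filter fun I => k ≤ I.card) := by
  obtain ⟨hBS, hfull⟩ := hB
  have hcard : (Icc 1 n).card = n := by simp
  constructor
  · intro hinv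
    have hex : ∃ m, ∃ I ∈ B, I.card = m ∧ 2 ≤ m := ⟨n, _, hfull, hcard, hn⟩
    obtain ⟨I₀, hI₀, hI₀card, hk⟩ := Nat.find_spec hex
    have hmin : ∀ I ∈ B, 2 ≤ I.card → Nat.find hex ≤ I.card :=
      fun I hI h2 => Nat.find_min' hex ⟨I, hI, rfl, h2⟩
    have hbase : ∀ J ⊆ Icc 1 n, J.card = Nat.find hex → J ∈ B := fun J hJS hJ =>
      mem_of_card_eq_of_perm_invariant hinv hI₀ (hBS.1 I₀ hI₀).1 hJS (hI₀card.trans hJ.symm)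
    have hkn : Nat.find hex ≤ n := hcard ▸ hmin _ hfull (by rwa [hcard])
    exact ⟨Nat.find hex, hk, hkn, hBS.eq_uniformBuildingSet hk hbase hmin⟩
  · rintro ⟨k, -, -, rfl⟩ σ hσ I hI
    exact image_mem_uniformBuildingSet σ.injective hσ hI
end
end
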